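/- Let n ≥ 2 and let e_1,…,e_n be the standard basis vectors of ℂ^n. Define the 2n−1 Hermitian matrices A_1 := e_1e_1^⊤, A_j := e_1e_1^⊤ + e_je_1^⊤ + e_1e_j^⊤ and Ã_j := e_1e_1^⊤ + i·e_je_1^⊤ − i·e_1e_j^⊤ for j = 2,…,n (i the imaginary unit). Then for all z, w ∈ ℂ^n with z_1 ≠ 0, if w^*A_1 w = z^*A_1 z, w^*A_j w = z^*A_j z and w^*Ã_j w = z^*Ã_j z for all j = 2,…,n, then w = c·z for some c ∈ ℂ with |c| = 1. In particular, these 2n−1 measurements determine every z ∈ ℂ^n with z_1 ≠ 0 up to a global phase factor. -/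

import Mathlib

open Matrix

lemma quad_std (n : ℕ) (i j : Fin n) (c : ℂ) (v : Fin n → ℂ) :
    star v ⬝ᵥ (Matrix.single i j c).mulVec v = (starRingEnd ℂ) (v i) * c * v j := by
  simp [dotProduct, Matrix.mulVec, Matrix.single, ite_and, Finset.sum_ite_eq,
    mul_assoc, Pi.star_apply]

/-- Let `n ≥ 2` and `e_1, …, e_n` the standard basis of `ℂ^n`.
With the `2n - 1` Hermitian matrices `A_1 = e_1 e_1ᵀ`,
`A_j = e_1 e_1ᵀ + e_j e_1ᵀ + e_1 e_jᵀ` and `Ã_j = e_1 e_1ᵀ + i e_j e_1ᵀ - i e_1 e_jᵀ`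
for `j ≠ 1`, every signal `z` with `z_1 ≠ 0` is determined up to a global phase
by the Hermitian-form measurements `z ↦ z^* A z`. -/
theorem stmt_1 (n : ℕ) [NeZero n] (hn : 2 ≤ n)
    (A B : Fin n → Matrix (Fin n) (Fin n) ℂ)
    (hA1 : A 0 = Matrix.single 0 0 (1 : ℂ))
    (hAj : ∀ j : Fin n, j ≠ 0 → A j =
      Matrix.single 0 0 (1 : ℂ) + Matrix.single j 0 1
        + Matrix.single 0 j 1)
    (hBj : ∀ j : Fin n, j ≠ 0 → B j =
      Matrix.single 0 0 (1 : ℂ) + Matrix.single j 0 Complex.I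
        - Matrix.single 0 j Complex.I)
    (z w : Fin n → ℂ) (hz : z 0 ≠ 0)
    (h1 : star w ⬝ᵥ (A 0).mulVec w = star z ⬝ᵥ (A 0).mulVec z)
    (hj : ∀ j : Fin n, j ≠ 0 → star w ⬝ᵥ (A j).mulVec w = star z ⬝ᵥ (A j).mulVec z)
    (hj' : ∀ j : Fin n, j ≠ 0 → star w ⬝ᵥ (B j).mulVec w = star z ⬝ᵥ (B j).mulVec z) :
    ∃ c : ℂ, ‖c‖ = 1 ∧ w = c • z := by
  rw [hA1, quad_std, quad_std] at h1
  have h0 : (starRingEnd ℂ) (w 0) * w 0 = (starRingEnd ℂ) (z 0) * z 0 := by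
    simpa using h1
  have hw0 : w 0 ≠ 0 := by
    intro h
    rw [h] at h0
    simp only [map_zero, zero_mul, mul_zero] at h0
    rcases mul_eq_zero.mp h0.symm with h' | h'
    · exact hz (by simpa using h')
    · exact hz h'
  have hcw0 : (starRingEnd ℂ) (w 0) ≠ 0 := by simpa [map_eq_zero] using hw0
  have key : ∀ j : Fin n, (starRingEnd ℂ) (w 0) * w j = (starRingEnd ℂ) (z 0) * z j := by
    intro j
    by_cases hj0 : j = 0
    · subst hj0; simpa using h0
    · have hA := hj j hj0
      have hB := hj' j hj0
      rw [hAj j hj0] at hA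
      rw [hBj j hj0] at hB
      simp only [Matrix.add_mulVec, Matrix.sub_mulVec, dotProduct_add, dotProduct_sub,
        quad_std] at hA hB
      have e2 : Complex.I * ((starRingEnd ℂ) (w j) * w 0 - (starRingEnd ℂ) (w 0) * w j) =
          Complex.I * ((starRingEnd ℂ) (z j) * z 0 - (starRingEnd ℂ) (z 0) * z j) := by
        linear_combination hB - h1
      have e2' := mul_left_cancel₀ Complex.I_ne_zero e2
      linear_combination (1/2 : ℂ) * hA - (1/2 : ℂ) * e2' - (1/2 : ℂ) * h1
  refine ⟨(starRingEnd ℂ) (z 0) / (starRingEnd ℂ) (w 0), ?_, ?_⟩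
  · have habs : ‖w 0‖ = ‖z 0‖ := by
      have h := congrArg norm h0
      rw [norm_mul, norm_mul, Complex.norm_conj, Complex.norm_conj] at h
      exact (mul_self_inj (norm_nonneg _) (norm_nonneg _)).mp h
    rw [norm_div, Complex.norm_conj, Complex.norm_conj, habs,
      div_self (by simpa using hz)]
  · funext j
    have hk := key j
    have : w j = (starRingEnd ℂ) (z 0) / (starRingEnd ℂ) (w 0) * z j := by
      field_simp
      linear_combination hk
    simpa [Pi.smul_apply, smul_eq_mul] using this
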